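/- Assume the Setup (Section 7.2) with G a finite group, and let p = [G : P] and q = [G : Q]. Then for every subset Z ⊆ E: p·|α ∖ γ|_Z + q·|β ∖ γ'|_Z ≤ p·|α|_Z + q·|β|_Z, where |X|_Z = Σ_{g ∈ G} |X|*_{g • Z}. -/

import Mathlib

/-!
A translate `g • Z` is separated by `A = α \ γ` but not by `α` only if `g • Z ⊆ α` and `g • Z`
meets both `A` and `γ`. By the edge property all such `g` lie in one right coset of `P`, so
`p` times their number is at most `|G|`. If there is one, moving `g • Z` by a suitable element
of `x⁻¹ P` gives a translate separated by `β` but not by `B`; these translates form a union of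
right cosets of `Q`, so `q` times their number is at least `|G|`. Adding this to the symmetric
inequality (for `β`, `α`, `x⁻¹`) and to the identities
`Σ |A|* + #{α separates, A does not} = Σ |α|* + #{A separates, α does not}` (and likewise for
`B`, `β`) gives the claim.
-/

open Pointwise

open scoped Classical

/-- `sep X Z` is the indicator `|X|*_Z`: it is `1` if `X` separates `Z`
(i.e. `Z` meets both `X` and its complement) and `0` otherwise. -/
noncomputable def sep {E : Type*} (X Z : Set E) : ℕ :=
  if (Z ∩ X).Nonempty ∧ (Z ∩ Xᶜ).Nonempty then 1 else 0

section Sep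

variable {E : Type*} {X Y Z : Set E}

theorem sep_le_one (X Z : Set E) : sep X Z ≤ 1 := by
  unfold sep; split <;> simp

theorem sep_eq_one (h₁ : (Z ∩ X).Nonempty) (h₂ : (Z ∩ Xᶜ).Nonempty) : sep X Z = 1 :=
  if_pos ⟨h₁, h₂⟩

theorem sep_eq_zero_of_disjoint (h : Disjoint Z X) : sep X Z = 0 :=
  if_neg fun ⟨h₁, _⟩ ↦ h₁.not_disjoint h

theorem subset_of_sep_eq_zero (h₁ : (Z ∩ X).Nonempty) (h₀ : sep X Z = 0) : Z ⊆ X := by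
  by_contra hZ
  have : sep X Z = 1 := sep_eq_one h₁ (Set.inter_compl_nonempty_iff.mpr hZ)
  omega

theorem subset_and_nonempty_of_sep_sdiff (h₁ : sep (X \ Y) Z = 1) (h₀ : sep X Z = 0) :
    Z ⊆ X ∧ (Z \ Y).Nonempty ∧ (Z ∩ Y).Nonempty := by
  obtain ⟨⟨v, hvZ, hvX, hvY⟩, ⟨w, hwZ, hw⟩⟩ :
      (Z ∩ (X \ Y)).Nonempty ∧ (Z ∩ (X \ Y)ᶜ).Nonempty := by
    unfold sep at h₁; split at h₁ <;> simp_all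
  have hZX := subset_of_sep_eq_zero ⟨v, hvZ, hvX⟩ h₀
  exact ⟨hZX, ⟨v, hvZ, hvY⟩, ⟨w, hwZ, by_contra fun hwY ↦ hw ⟨hZX hwZ, hwY⟩⟩⟩

variable {G : Type*} [Group G] [MulAction G E]

theorem sep_smul_smul (g : G) (X Z : Set E) : sep (g • X) (g • Z) = sep X Z := by
  simp only [sep, ← Set.smul_set_inter, ← Set.smul_set_compl, Set.smul_set_nonempty]

theorem sep_smul_of_smul_eq {g : G} (hX : g • X = X) (Z : Set E) : sep X (g • Z) = sep X Z := by
  conv_lhs => rw [← hX]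
  exact sep_smul_smul g X Z

end Sep

namespace Subgroup

variable {G : Type*} [Group G] [Finite G]

theorem index_mul_card_le_of_mul_inv_mem {P : Subgroup G} {s : Finset G}
    (hs : ∀ a ∈ s, ∀ b ∈ s, a * b⁻¹ ∈ P) : P.index * s.card ≤ Nat.card G := by
  rcases s.eq_empty_or_nonempty with rfl | ⟨b, hb⟩
  · simp
  rw [← P.index_mul_card, ← Nat.card_eq_finsetCard]
  gcongr
  refine Nat.card_le_card_of_injective (fun a : s ↦ (⟨a * b⁻¹, hs a a.2 b hb⟩ : P)) ?_
  intro a₁ a₂ h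
  simpa using h

theorem card_le_index_mul_card_of_mul_mem {Q : Subgroup G} {t : Finset G}
    (ht : ∀ h ∈ Q, ∀ a ∈ t, h * a ∈ t) (hne : t.Nonempty) :
    Nat.card G ≤ Q.index * t.card := by
  obtain ⟨b, hb⟩ := hne
  rw [← Q.index_mul_card, ← Nat.card_eq_finsetCard]
  gcongr
  refine Nat.card_le_card_of_injective (fun h : Q ↦ (⟨h * b, ht h h.2 b hb⟩ : t)) ?_
  intro h₁ h₂ h
  simpa using h

end Subgroup

section SepGain

variable (G : Type*) {E : Type*} [Group G] [Fintype G] [MulAction G E]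

noncomputable def sepGain (X Y Z : Set E) : Finset G :=
  {g | sep X (g • Z) = 1 ∧ sep Y (g • Z) = 0}

variable {G}

theorem sum_sep_add_card_sepGain (X Y Z : Set E) :
    ∑ g : G, sep X (g • Z) + (sepGain G Y X Z).card =
      ∑ g : G, sep Y (g • Z) + (sepGain G X Y Z).card := by
  simp only [sepGain, Finset.card_filter, ← Finset.sum_add_distrib]
  refine Finset.sum_congr rfl fun g _ ↦ ?_
  have := sep_le_one X (g • Z)
  have := sep_le_one Y (g • Z)
  split_ifs <;> omega

theorem mul_mem_sepGain {X Y Z : Set E} {h g : G} (hX : h • X = X) (hY : h • Y = Y)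
    (hg : g ∈ sepGain G X Y Z) : h * g ∈ sepGain G X Y Z := by
  simpa only [sepGain, Finset.mem_filter_univ, mul_smul, sep_smul_of_smul_eq hX,
    sep_smul_of_smul_eq hY] using hg

end SepGain

open MulAction

section Saturation

variable {G E : Type*} [Group G] [MulAction G E] {α β : Set E} {x : G}

/-- The set `γ = P • (α ∩ x • β)` of the setup, where `P` is the stabilizer of `α`. -/
def saturatedMeet (α β : Set E) (x : G) : Set E :=
  (stabilizer G α : Set G) • (α ∩ x • β)

theorem smul_saturatedMeet {h : G} (hh : h ∈ stabilizer G α) :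
    h • saturatedMeet α β x = saturatedMeet α β x := by
  rw [saturatedMeet, ← smul_assoc, smul_coe_set hh]

theorem inter_smul_subset_saturatedMeet : α ∩ x • β ⊆ saturatedMeet α β x :=
  fun y hy ↦ Set.mem_smul.mpr ⟨1, one_mem _, y, hy, one_smul G y⟩

theorem smul_sdiff_saturatedMeet {h : G} (hh : h ∈ stabilizer G α) :
    h • (α \ saturatedMeet α β x) = α \ saturatedMeet α β x := by
  rw [Set.smul_set_sdiff, mem_stabilizer_iff.mp hh, smul_saturatedMeet hh]

theorem mul_inv_mem_stabilizer_of_smul_subset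
    (hedge : ∀ y : G, (α ∩ y • α).Nonempty → y • α = α) {Z : Set E} (hZ : Z.Nonempty)
    {g₁ g₂ : G} (h₁ : g₁ • Z ⊆ α) (h₂ : g₂ • Z ⊆ α) : g₁ * g₂⁻¹ ∈ stabilizer G α := by
  obtain ⟨z, hz⟩ := hZ
  refine hedge _ ⟨g₁ • z, h₁ (Set.smul_mem_smul_set hz), ?_⟩
  rw [show g₁ • z = (g₁ * g₂⁻¹) • g₂ • z by rw [smul_smul, inv_mul_cancel_right]]
  exact Set.smul_mem_smul_set (h₂ (Set.smul_mem_smul_set hz))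

theorem sep_inv_smul_of_subset {W : Set E} (hW : W ⊆ α) (hin : (W ∩ (α ∩ x • β)).Nonempty)
    (hout : (W \ x • β).Nonempty) :
    sep β (x⁻¹ • W) = 1 ∧ sep (β \ saturatedMeet β α x⁻¹) (x⁻¹ • W) = 0 := by
  obtain ⟨w, hwW, -, hwβ⟩ := hin
  obtain ⟨v, hvW, hvβ⟩ := hout
  refine ⟨sep_eq_one
    ⟨x⁻¹ • w, Set.smul_mem_smul_set hwW, Set.mem_smul_set_iff_inv_smul_mem.mp hwβ⟩
    ⟨x⁻¹ • v, Set.smul_mem_smul_set hvW, fun h ↦ hvβ (Set.mem_smul_set_iff_inv_smul_mem.mpr h)⟩,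
    sep_eq_zero_of_disjoint (Set.disjoint_left.mpr fun u hu ⟨huβ, hu'⟩ ↦ hu' ?_)⟩
  exact inter_smul_subset_saturatedMeet ⟨huβ, Set.smul_set_mono hW hu⟩

end Saturation

section Counting

variable {G E : Type*} [Group G] [Fintype G] [MulAction G E] {α β : Set E} {x : G}

theorem exists_mem_sepGain_of_mem_sepGain {Z : Set E} {g : G}
    (hg : g ∈ sepGain G (α \ saturatedMeet α β x) α Z) :
    ∃ g', g' ∈ sepGain G β (β \ saturatedMeet β α x⁻¹) Z := by
  rw [sepGain, Finset.mem_filter_univ] at hg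
  obtain ⟨hZα, ⟨v, hvZ, hvγ⟩, ⟨w, hwZ, hwγ⟩⟩ := subset_and_nonempty_of_sep_sdiff hg.1 hg.2
  obtain ⟨a, ha, s, hs, rfl⟩ := Set.mem_smul.mp hwγ
  have ha' : a⁻¹ • α = α := mem_stabilizer_iff.mp (inv_mem ha)
  -- Moving `g • Z` by `a⁻¹` puts the witness `a • s ∈ γ` into `α ∩ x • β` itself.
  have key := sep_inv_smul_of_subset (W := a⁻¹ • g • Z) (x := x) (β := β)
    (ha' ▸ Set.smul_set_mono hZα)
    ⟨s, by simpa using Set.smul_mem_smul_set (a := a⁻¹) hwZ, hs⟩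
    ⟨a⁻¹ • v, Set.smul_mem_smul_set hvZ, fun hv ↦ hvγ <| smul_inv_smul a v ▸
      Set.smul_mem_smul ha
        (show a⁻¹ • v ∈ α ∩ x • β from ⟨ha' ▸ Set.smul_mem_smul_set (hZα hvZ), hv⟩)⟩
  exact ⟨x⁻¹ * a⁻¹ * g, by simpa only [sepGain, Finset.mem_filter_univ, mul_smul] using key⟩

theorem index_mul_card_sepGain_le (hedge : ∀ y : G, (α ∩ y • α).Nonempty → y • α = α)
    (x : G) (Z : Set E) :
    (stabilizer G α).index * (sepGain G (α \ saturatedMeet α β x) α Z).card ≤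
      (stabilizer G β).index * (sepGain G β (β \ saturatedMeet β α x⁻¹) Z).card := by
  rcases (sepGain G (α \ saturatedMeet α β x) α Z).eq_empty_or_nonempty with h | ⟨g, hg⟩
  · simp [h]
  calc _ ≤ Nat.card G := Subgroup.index_mul_card_le_of_mul_inv_mem fun g₁ hg₁ g₂ hg₂ ↦ by
          simp only [sepGain, Finset.mem_filter_univ] at hg₁ hg₂
          obtain ⟨h₁, hZ, -⟩ := subset_and_nonempty_of_sep_sdiff hg₁.1 hg₁.2
          obtain ⟨h₂, -⟩ := subset_and_nonempty_of_sep_sdiff hg₂.1 hg₂.2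
          exact mul_inv_mem_stabilizer_of_smul_subset hedge
            (Set.smul_set_nonempty.mp (hZ.mono Set.sdiff_subset)) h₁ h₂
    _ ≤ _ := Subgroup.card_le_index_mul_card_of_mul_mem
          (fun h hh _ ↦ mul_mem_sepGain hh (smul_sdiff_saturatedMeet hh))
          (exists_mem_sepGain_of_mem_sepGain hg)

end Counting

/-- Lemma 7.6 (analogue of Krstić–Vogtmann Lemma 7.2): in the Setup
(Section 7.2) with `G` finite, `p = [G : P]`, `q = [G : Q]`, for every
`Z ⊆ E`: `p·|α∖γ|_Z + q·|β∖γ'|_Z ≤ p·|α|_Z + q·|β|_Z`, where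
`|X|_Z = Σ_{g ∈ G} |X|*_{g • Z}`. -/
theorem stmt_11 {G E : Type*} [Group G] [Fintype G] [MulAction G E]
    (α β : Set E)
    (hedgeα : ∀ y : G, (α ∩ y • α).Nonempty → y • α = α)
    (hedgeβ : ∀ y : G, (β ∩ y • β).Nonempty → y • β = β)
    (P Q : Subgroup G)
    (hP : P = MulAction.stabilizer G α)
    (hQ : Q = MulAction.stabilizer G β)
    (x : G)
    (γ γ' : Set E)
    (hγ : γ = ⋃ g ∈ P, g • (α ∩ x • β))
    (hγ' : γ' = ⋃ g ∈ Q, g • (β ∩ x⁻¹ • α))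
    (p q : ℕ) (hp : p = P.index) (hq : q = Q.index) :
    ∀ Z : Set E,
      p * (∑ g : G, sep (α \ γ) (g • Z)) + q * (∑ g : G, sep (β \ γ') (g • Z)) ≤
        p * (∑ g : G, sep α (g • Z)) + q * (∑ g : G, sep β (g • Z)) := by
  intro Z
  subst hP hQ
  replace hγ : γ = saturatedMeet α β x := hγ.trans (Set.iUnion_smul_set _ _)
  replace hγ' : γ' = saturatedMeet β α x⁻¹ := hγ'.trans (Set.iUnion_smul_set _ _)
  subst hγ hγ'
  have gainα := index_mul_card_sepGain_le (β := β) hedgeα x Z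
  have gainβ := index_mul_card_sepGain_le (β := α) hedgeβ x⁻¹ Z
  rw [inv_inv] at gainβ
  have sumα := congrArg (p * ·)
    (sum_sep_add_card_sepGain (G := G) (α \ saturatedMeet α β x) α Z)
  have sumβ := congrArg (q * ·)
    (sum_sep_add_card_sepGain (G := G) (β \ saturatedMeet β α x⁻¹) β Z)
  subst hp hq
  simp only [mul_add] at sumα sumβ
  linarith
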